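/- In the ODE flow setting, fix x₀ ∈ ℝ^d, and for a Borel probability measure ρ on ℝ^ℓ with finite second moment let ν_ρ(t) denote the pushforward of ρ under the map θ ↦ X(t; θ, x₀). Then there exist constants C₀, C₁ > 0 depending only on the Lipschitz constant C such that for all Borel probability measures μ, μ̂ on ℝ^ℓ with finite second moments and all t ∈ [0,T]: W₂(ν_μ(t), ν_μ̂(t)) ≤ (C₁ t e^{C₀ t})^{1/2} · W₂(μ, μ̂). (This is the ODE specialization of the key inequality Eq. (C.8) in the proof of Theorem 2.2: the Wasserstein-2 distance between the laws of the solutions at time t is controlled by the Wasserstein-2 distance between the parameter distributions.) -/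

import Mathlib

open MeasureTheory Set

/-- The squared Wasserstein-2 distance between two Borel measures. -/
noncomputable def W2sq {E : Type*} [MeasurableSpace E] [NormedAddCommGroup E]
    (μ ν : Measure E) : ℝ :=
  sInf {r : ℝ | ∃ π : Measure (E × E), IsProbabilityMeasure π ∧
    π.map Prod.fst = μ ∧ π.map Prod.snd = ν ∧ r = ∫ p, ‖p.1 - p.2‖ ^ 2 ∂π}

/-- The Wasserstein-2 distance. -/
noncomputable def W2 {E : Type*} [MeasurableSpace E] [NormedAddCommGroup E]
    (μ ν : Measure E) : ℝ :=
  Real.sqrt (W2sq μ ν)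

/-!
By Grönwall's inequality, two solutions started at the same `x₀` with parameters `θ, θ̂` stay
within `‖θ - θ̂‖ (e^{Ct} - 1)` of each other, so `θ ↦ X(t; θ, x₀)` is Lipschitz with that
constant. Pushing a coupling of `μ, μ̂` forward by this map in both coordinates gives a coupling
of the two laws at time `t` whose transport cost is at most the squared constant times the
original one; hence `W₂` contracts by the Lipschitz constant, and
`(e^{Ct} - 1)² ≤ (Ct e^{Ct})² ≤ C² T t e^{2Ct}`.
-/

open scoped NNReal

section Wasserstein

variable {E F : Type*} [NormedAddCommGroup E] [MeasurableSpace E]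
  [NormedAddCommGroup F] [MeasurableSpace F]

noncomputable def transportCosts (μ ν : Measure E) : Set ℝ :=
  {r : ℝ | ∃ π : Measure (E × E), IsProbabilityMeasure π ∧
    π.map Prod.fst = μ ∧ π.map Prod.snd = ν ∧ r = ∫ p, ‖p.1 - p.2‖ ^ 2 ∂π}

lemma W2sq_eq_sInf_transportCosts (μ ν : Measure E) :
    W2sq μ ν = sInf (transportCosts μ ν) := rfl

lemma bddBelow_transportCosts (μ ν : Measure E) : BddBelow (transportCosts μ ν) :=
  ⟨0, by rintro _ ⟨π, -, -, -, rfl⟩; exact integral_nonneg fun p => by positivity⟩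

lemma transportCosts_nonempty (μ ν : Measure E) [IsProbabilityMeasure μ]
    [IsProbabilityMeasure ν] : (transportCosts μ ν).Nonempty :=
  ⟨_, μ.prod ν, inferInstance, by simp, by simp, rfl⟩

lemma W2sq_le_integral {μ ν : Measure E} {π : Measure (E × E)} [IsProbabilityMeasure π]
    (h₁ : π.map Prod.fst = μ) (h₂ : π.map Prod.snd = ν) :
    W2sq μ ν ≤ ∫ p, ‖p.1 - p.2‖ ^ 2 ∂π :=
  csInf_le (bddBelow_transportCosts μ ν) ⟨π, inferInstance, h₁, h₂, rfl⟩

variable [BorelSpace E] [SecondCountableTopology E]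

lemma W2sq_map_le_integral {α : Type*} [MeasurableSpace α] {μ ν : Measure α}
    {π : Measure (α × α)} [IsProbabilityMeasure π] (h₁ : π.map Prod.fst = μ)
    (h₂ : π.map Prod.snd = ν) {g : α → E} (hg : Measurable g) :
    W2sq (μ.map g) (ν.map g) ≤ ∫ p, ‖g p.1 - g p.2‖ ^ 2 ∂π := by
  have hφ : Measurable (Prod.map g g) := hg.prodMap hg
  have : IsProbabilityMeasure (π.map (Prod.map g g)) :=
    Measure.isProbabilityMeasure_map hφ.aemeasurable
  calc W2sq (μ.map g) (ν.map g) ≤ ∫ q, ‖q.1 - q.2‖ ^ 2 ∂(π.map (Prod.map g g)) := by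
        refine W2sq_le_integral ?_ ?_
        · rw [Measure.map_map measurable_fst hφ, ← h₁, Measure.map_map hg measurable_fst]
          rfl
        · rw [Measure.map_map measurable_snd hφ, ← h₂, Measure.map_map hg measurable_snd]
          rfl
    _ = ∫ p, ‖g p.1 - g p.2‖ ^ 2 ∂π := integral_map hφ.aemeasurable (by fun_prop)

lemma integrable_sq_norm_sub_of_map {μ ν : Measure E} {π : Measure (E × E)}
    (h₁ : π.map Prod.fst = μ) (h₂ : π.map Prod.snd = ν)
    (hμ : Integrable (fun x => ‖x‖ ^ 2) μ) (hν : Integrable (fun x => ‖x‖ ^ 2) ν) :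
    Integrable (fun p : E × E => ‖p.1 - p.2‖ ^ 2) π := by
  have hfst : Integrable (fun p : E × E => ‖p.1‖ ^ 2) π := by
    subst h₁
    exact (integrable_map_measure (by fun_prop) measurable_fst.aemeasurable).mp hμ
  have hsnd : Integrable (fun p : E × E => ‖p.2‖ ^ 2) π := by
    subst h₂
    exact (integrable_map_measure (by fun_prop) measurable_snd.aemeasurable).mp hν
  refine ((hfst.add hsnd).const_mul 2).mono' (by fun_prop) (.of_forall fun p => ?_)
  -- `‖a - b‖² ≤ 2‖a‖² + 2‖b‖²`
  rw [Real.norm_of_nonneg (by positivity), Pi.add_apply]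
  nlinarith [norm_sub_le p.1 p.2, sq_nonneg (‖p.1‖ - ‖p.2‖), norm_nonneg (p.1 - p.2)]

variable [BorelSpace F] [SecondCountableTopology F]

lemma W2sq_map_le_of_lipschitzWith {μ ν : Measure E} [IsProbabilityMeasure μ]
    [IsProbabilityMeasure ν] (hμ : Integrable (fun x => ‖x‖ ^ 2) μ)
    (hν : Integrable (fun x => ‖x‖ ^ 2) ν) {g : E → F} {K : ℝ≥0} (hg : LipschitzWith K g) :
    W2sq (μ.map g) (ν.map g) ≤ K ^ 2 * W2sq μ ν := by
  rw [W2sq_eq_sInf_transportCosts μ, ← smul_eq_mul, ← Real.sInf_smul_of_nonneg (by positivity)]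
  refine le_csInf ((transportCosts_nonempty μ ν).smul_set) ?_
  rintro _ ⟨_, ⟨π, hπ, h₁, h₂, rfl⟩, rfl⟩
  have hpt : ∀ p : E × E, ‖g p.1 - g p.2‖ ^ 2 ≤ K ^ 2 * ‖p.1 - p.2‖ ^ 2 := fun p => by
    rw [← mul_pow, ← dist_eq_norm, ← dist_eq_norm]
    exact pow_le_pow_left₀ dist_nonneg (hg.dist_le_mul p.1 p.2) 2
  calc W2sq (μ.map g) (ν.map g) ≤ ∫ p, ‖g p.1 - g p.2‖ ^ 2 ∂π :=
        W2sq_map_le_integral h₁ h₂ hg.continuous.measurable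
    _ ≤ ∫ p, K ^ 2 * ‖p.1 - p.2‖ ^ 2 ∂π :=
        integral_mono_of_nonneg (.of_forall fun p => by positivity)
          ((integrable_sq_norm_sub_of_map h₁ h₂ hμ hν).const_mul _) (.of_forall hpt)
    _ = (K : ℝ) ^ 2 • ∫ p, ‖p.1 - p.2‖ ^ 2 ∂π := integral_const_mul _ _

lemma W2_map_le_of_lipschitzWith {μ ν : Measure E} [IsProbabilityMeasure μ]
    [IsProbabilityMeasure ν] (hμ : Integrable (fun x => ‖x‖ ^ 2) μ)
    (hν : Integrable (fun x => ‖x‖ ^ 2) ν) {g : E → F} {K : ℝ≥0} (hg : LipschitzWith K g) :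
    W2 (μ.map g) (ν.map g) ≤ K * W2 μ ν := by
  calc W2 (μ.map g) (ν.map g) ≤ Real.sqrt (K ^ 2 * W2sq μ ν) :=
        Real.sqrt_le_sqrt (W2sq_map_le_of_lipschitzWith hμ hν hg)
    _ = K * W2 μ ν := by rw [Real.sqrt_mul (by positivity), Real.sqrt_sq K.coe_nonneg, W2]

end Wasserstein

lemma EuclideanSpace.norm_le_sum_abs {ι : Type*} [Fintype ι] (x : EuclideanSpace ℝ ι) :
    ‖x‖ ≤ ∑ i, |x i| := by
  refine (pow_le_pow_iff_left₀ (norm_nonneg x) (by positivity) two_ne_zero).mp ?_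
  rw [EuclideanSpace.norm_sq_eq]
  simpa only [Real.norm_eq_abs] using
    Finset.sum_sq_le_sq_sum_of_nonneg fun i _ => abs_nonneg (x i)

lemma Real.exp_sub_one_le_mul_exp (x : ℝ) : Real.exp x - 1 ≤ x * Real.exp x := by
  have h := mul_le_mul_of_nonneg_right (Real.one_sub_le_exp_neg x) (Real.exp_pos x).le
  rw [← Real.exp_add, neg_add_cancel, Real.exp_zero] at h
  linarith

section Flow

variable {d l : ℕ} {C T : ℝ}
  {f : EuclideanSpace ℝ (Fin d) → ℝ → EuclideanSpace ℝ (Fin l) → EuclideanSpace ℝ (Fin d)}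
  {X : ℝ → EuclideanSpace ℝ (Fin l) → EuclideanSpace ℝ (Fin d) → EuclideanSpace ℝ (Fin d)}

lemma norm_flow_sub_le
    (hLip : ∀ (x xhat : EuclideanSpace ℝ (Fin d)) (θ θhat : EuclideanSpace ℝ (Fin l)),
      ∀ t ∈ Icc (0 : ℝ) T,
      ∑ i, |f x t θ i - f xhat t θhat i| ≤ C * (‖x - xhat‖ + ‖θ - θhat‖))
    (hX0 : ∀ θ x₀, X 0 θ x₀ = x₀)
    (hXode : ∀ θ x₀, ∀ t ∈ Icc (0 : ℝ) T,
      HasDerivWithinAt (fun s => X s θ x₀) (f (X t θ x₀) t θ) (Icc 0 T) t)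
    (x₀ : EuclideanSpace ℝ (Fin d)) (θ θhat : EuclideanSpace ℝ (Fin l)) :
    ∀ t ∈ Icc (0 : ℝ) T,
      ‖X t θ x₀ - X t θhat x₀‖ ≤ ‖θ - θhat‖ * (Real.exp (C * t) - 1) := by
  have hcurve : ∀ θ, ContinuousOn (fun s => X s θ x₀) (Icc 0 T) :=
    fun θ s hs => (hXode θ x₀ s hs).continuousWithinAt
  have hderiv : ∀ s ∈ Ico (0 : ℝ) T, HasDerivWithinAt (fun s => X s θ x₀ - X s θhat x₀)
      (f (X s θ x₀) s θ - f (X s θhat x₀) s θhat) (Ici s) s := fun s hs =>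
    ((hXode θ x₀ s (Ico_subset_Icc_self hs)).sub
      (hXode θhat x₀ s (Ico_subset_Icc_self hs))).mono_of_mem_nhdsWithin
      (Icc_mem_nhdsGE_of_mem hs)
  have hbound : ∀ s ∈ Ico (0 : ℝ) T,
      ‖f (X s θ x₀) s θ - f (X s θhat x₀) s θhat‖ ≤
        C * ‖X s θ x₀ - X s θhat x₀‖ + C * ‖θ - θhat‖ := fun s hs => by
    rw [← mul_add]
    exact (EuclideanSpace.norm_le_sum_abs _).trans (hLip _ _ _ _ s (Ico_subset_Icc_self hs))
  intro t ht
  have h := norm_le_gronwallBound_of_norm_deriv_right_le (δ := 0)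
    ((hcurve θ).fun_sub (hcurve θhat)) hderiv (by simp [hX0]) hbound t ht
  rcases eq_or_ne C 0 with rfl | hC
  · simpa [gronwallBound_K0] using h
  · simpa only [gronwallBound_of_K_ne_0 hC, zero_mul, zero_add, sub_zero,
      mul_div_cancel_left₀ _ hC] using h

lemma lipschitzWith_flow
    (hLip : ∀ (x xhat : EuclideanSpace ℝ (Fin d)) (θ θhat : EuclideanSpace ℝ (Fin l)),
      ∀ t ∈ Icc (0 : ℝ) T,
      ∑ i, |f x t θ i - f xhat t θhat i| ≤ C * (‖x - xhat‖ + ‖θ - θhat‖))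
    (hX0 : ∀ θ x₀, X 0 θ x₀ = x₀)
    (hXode : ∀ θ x₀, ∀ t ∈ Icc (0 : ℝ) T,
      HasDerivWithinAt (fun s => X s θ x₀) (f (X t θ x₀) t θ) (Icc 0 T) t)
    (x₀ : EuclideanSpace ℝ (Fin d)) {t : ℝ} (ht : t ∈ Icc 0 T) :
    LipschitzWith (Real.exp (C * t) - 1).toNNReal fun θ => X t θ x₀ :=
  .of_dist_le' fun θ θhat => by
    simpa only [dist_eq_norm, mul_comm] using norm_flow_sub_le hLip hX0 hXode x₀ θ θhat t ht

end Flow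

lemma exp_sub_one_le_sqrt {C T t : ℝ} (hC : 0 ≤ C) (ht : t ∈ Icc 0 T) :
    Real.exp (C * t) - 1 ≤ Real.sqrt (C ^ 2 * T * t * Real.exp (2 * C * t)) := by
  have hexp : Real.exp (C * t) ^ 2 = Real.exp (2 * C * t) := by
    rw [← Real.exp_nat_mul]
    ring_nf
  calc Real.exp (C * t) - 1 ≤ C * t * Real.exp (C * t) := Real.exp_sub_one_le_mul_exp _
    _ = Real.sqrt ((C * t * Real.exp (C * t)) ^ 2) := by
        rw [Real.sqrt_sq (mul_nonneg (mul_nonneg hC ht.1) (Real.exp_pos _).le)]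
    _ = Real.sqrt (C ^ 2 * t * t * Real.exp (2 * C * t)) := by rw [← hexp]; ring_nf
    _ ≤ Real.sqrt (C ^ 2 * T * t * Real.exp (2 * C * t)) := by
        have := ht.1
        gcongr
        exact ht.2

theorem ode_W2_parameter_distribution_bound_general
    {d l : ℕ} (C T : ℝ) (hC : 0 < C) (hT : 0 < T)
    (f : EuclideanSpace ℝ (Fin d) → ℝ → EuclideanSpace ℝ (Fin l) → EuclideanSpace ℝ (Fin d))
    (hLip : ∀ (x xhat : EuclideanSpace ℝ (Fin d)) (θ θhat : EuclideanSpace ℝ (Fin l)),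
      ∀ t ∈ Icc (0 : ℝ) T,
      ∑ i, |f x t θ i - f xhat t θhat i| ≤ C * (‖x - xhat‖ + ‖θ - θhat‖))
    (X : ℝ → EuclideanSpace ℝ (Fin l) → EuclideanSpace ℝ (Fin d) → EuclideanSpace ℝ (Fin d))
    (hX0 : ∀ θ x₀, X 0 θ x₀ = x₀)
    (hXode : ∀ θ x₀, ∀ t ∈ Icc (0 : ℝ) T,
      HasDerivWithinAt (fun s => X s θ x₀) (f (X t θ x₀) t θ) (Icc 0 T) t)
    (x₀ : EuclideanSpace ℝ (Fin d)) :
    ∃ C₀ > (0 : ℝ), ∃ C₁ > (0 : ℝ),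
      ∀ μ μhat : Measure (EuclideanSpace ℝ (Fin l)),
        IsProbabilityMeasure μ → IsProbabilityMeasure μhat →
        Integrable (fun θ => ‖θ‖ ^ 2) μ → Integrable (fun θ => ‖θ‖ ^ 2) μhat →
        ∀ t ∈ Icc (0 : ℝ) T,
          W2 (μ.map fun θ => X t θ x₀) (μhat.map fun θ => X t θ x₀) ≤
            Real.sqrt (C₁ * t * Real.exp (C₀ * t)) * W2 μ μhat := by
  refine ⟨2 * C, by positivity, C ^ 2 * T, by positivity, ?_⟩
  intro μ μhat _ _ hμ hμhat t ht
  calc W2 (μ.map fun θ => X t θ x₀) (μhat.map fun θ => X t θ x₀)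
      ≤ (Real.exp (C * t) - 1).toNNReal * W2 μ μhat :=
        W2_map_le_of_lipschitzWith hμ hμhat (lipschitzWith_flow hLip hX0 hXode x₀ ht)
    _ ≤ Real.sqrt (C ^ 2 * T * t * Real.exp (2 * C * t)) * W2 μ μhat := by
        refine mul_le_mul_of_nonneg_right ?_ (Real.sqrt_nonneg _)
        rw [Real.coe_toNNReal']
        exact max_le (exp_sub_one_le_sqrt hC.le ht) (Real.sqrt_nonneg _)

/-- ODE specialization of Eq. (C.8) in the proof of Theorem 2.2:
in the ODE flow setting, for a fixed initial condition `x₀`, the `W₂`-distance between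
the pushforwards of two parameter distributions `μ, μ̂` under `θ ↦ X(t; θ, x₀)` is
controlled by `(C₁ t e^{C₀ t})^{1/2} · W₂(μ, μ̂)`, with constants depending only on the
Lipschitz constant `C`. -/
theorem ode_W2_parameter_distribution_bound
    {d l : ℕ} (C T : ℝ) (hC : 0 < C) (hT : 0 < T)
    (f : EuclideanSpace ℝ (Fin d) → ℝ → EuclideanSpace ℝ (Fin l) → EuclideanSpace ℝ (Fin d))
    (hf_cont : ContinuousOn
      (fun p : EuclideanSpace ℝ (Fin d) × ℝ × EuclideanSpace ℝ (Fin l) => f p.1 p.2.1 p.2.2)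
      (univ ×ˢ Icc 0 T ×ˢ univ))
    (hLip : ∀ (x xhat : EuclideanSpace ℝ (Fin d)) (θ θhat : EuclideanSpace ℝ (Fin l)),
      ∀ t ∈ Icc (0 : ℝ) T,
      ∑ i, |f x t θ i - f xhat t θhat i| ≤ C * (‖x - xhat‖ + ‖θ - θhat‖))
    (hM₀ : ∃ M₀ : ℝ, ∀ t ∈ Icc (0 : ℝ) T, ∑ i, |f 0 t 0 i| ≤ M₀)
    (X : ℝ → EuclideanSpace ℝ (Fin l) → EuclideanSpace ℝ (Fin d) → EuclideanSpace ℝ (Fin d))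
    (hX0 : ∀ θ x₀, X 0 θ x₀ = x₀)
    (hXode : ∀ θ x₀, ∀ t ∈ Icc (0 : ℝ) T,
      HasDerivWithinAt (fun s => X s θ x₀) (f (X t θ x₀) t θ) (Icc 0 T) t)
    (hXcont : ContinuousOn
      (fun p : ℝ × EuclideanSpace ℝ (Fin l) × EuclideanSpace ℝ (Fin d) => X p.1 p.2.1 p.2.2)
      (Icc 0 T ×ˢ univ ×ˢ univ))
    (x₀ : EuclideanSpace ℝ (Fin d)) :
    ∃ C₀ > (0 : ℝ), ∃ C₁ > (0 : ℝ),
      ∀ μ μhat : Measure (EuclideanSpace ℝ (Fin l)),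
        IsProbabilityMeasure μ → IsProbabilityMeasure μhat →
        Integrable (fun θ => ‖θ‖ ^ 2) μ → Integrable (fun θ => ‖θ‖ ^ 2) μhat →
        ∀ t ∈ Icc (0 : ℝ) T,
          W2 (μ.map fun θ => X t θ x₀) (μhat.map fun θ => X t θ x₀) ≤
            Real.sqrt (C₁ * t * Real.exp (C₀ * t)) * W2 μ μhat :=
  ode_W2_parameter_distribution_bound_general C T hC hT f hLip X hX0 hXode x₀
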